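/- arXiv:2505.17859 — 3 statements merged into one kernel-verified Lean document; each statement's English description precedes it below -/
import Mathlib

section
/- Let E be a normed real vector space, let G₀, G₁ : E → E, let θ₀ ∈ E, and let θ : ℝ → E be differentiable at 0 with θ(0) = θ₀. Assume: (i) for all ε in some neighborhood of 0, (1−ε) • G₀(θ(ε)) + ε • G₁(θ(ε)) = 0; (ii) G₀(θ₀) = 0; (iii) G₀ is differentiable at θ₀ and its Fréchet derivative there is realized by a continuous linear equivalence H : E ≃L[ℝ] E; (iv) G₁ is continuous at θ₀. Then the derivative of θ at 0 equals −H⁻¹(G₁(θ₀)). In particular, the influence function of a DPO-type objective is proportional to the gradient of the loss evaluated on the contaminating (label-flipped) data. -/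
open Filter Topology

theorem stmt0
    {E : Type*} [NormedAddCommGroup E] [NormedSpace ℝ E]
    (G₀ G₁ : E → E) (θ₀ : E) (θ : ℝ → E)
    (hθdiff : DifferentiableAt ℝ θ 0) (hθ0 : θ 0 = θ₀)
    (H : E ≃L[ℝ] E)
    (hstat : ∀ᶠ ε in 𝓝 (0 : ℝ), (1 - ε) • G₀ (θ ε) + ε • G₁ (θ ε) = 0)
    (hG₀0 : G₀ θ₀ = 0)
    (hG₀ : HasFDerivAt G₀ (H : E →L[ℝ] E) θ₀)
    (hG₁ : ContinuousAt G₁ θ₀) :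
    deriv θ 0 = -(H.symm (G₁ θ₀)) := by
  set f : ℝ → E := fun ε => G₀ (θ ε) with hf
  -- chain rule derivative
  have hθ' : HasDerivAt θ (deriv θ 0) 0 := hθdiff.hasDerivAt
  have hcomp : HasDerivAt f (H (deriv θ 0)) 0 := by
    have := (hθ0 ▸ hG₀ : HasFDerivAt G₀ (H : E →L[ℝ] E) (θ 0)).comp_hasDerivAt 0 hθ'
    exact this
  -- derivative of f via stationarity
  have hθcont : ContinuousAt θ 0 := hθdiff.continuousAt
  have hcont : Tendsto (fun ε => -((1 - ε)⁻¹ • G₁ (θ ε))) (𝓝 (0 : ℝ)) (𝓝 (-(G₁ θ₀))) := by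
    have h1 : Tendsto (fun ε : ℝ => (1 - ε)⁻¹) (𝓝 0) (𝓝 1) := by
      have : Tendsto (fun ε : ℝ => 1 - ε) (𝓝 0) (𝓝 1) := by
        simpa using (tendsto_const_nhds.sub tendsto_id : Tendsto (fun ε : ℝ => 1 - ε) (𝓝 0) (𝓝 (1 - 0)))
      simpa using this.inv₀ one_ne_zero
    have h2 : Tendsto (fun ε => G₁ (θ ε)) (𝓝 (0 : ℝ)) (𝓝 (G₁ θ₀)) := by
      rw [← hθ0]
      exact (hθ0 ▸ hG₁ : ContinuousAt G₁ (θ 0)).tendsto.comp hθcont.tendsto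
    simpa using (h1.smul h2).neg
  have hslope : Tendsto (slope f 0) (𝓝[≠] (0 : ℝ)) (𝓝 (-(G₁ θ₀))) := by
    have hEq : ∀ᶠ ε in 𝓝[≠] (0 : ℝ), slope f 0 ε = -((1 - ε)⁻¹ • G₁ (θ ε)) := by
      filter_upwards [nhdsWithin_le_nhds hstat,
        nhdsWithin_le_nhds (eventually_ne_nhds (by norm_num : (0:ℝ) ≠ 1)),
        self_mem_nhdsWithin] with ε h hne1 hne0
      have hne0' : ε ≠ 0 := hne0
      have hne1' : (1 - ε) ≠ 0 := sub_ne_zero.2 (Ne.symm hne1)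
      have hG0eval : (1 - ε) • G₀ (θ ε) = -(ε • G₁ (θ ε)) := by
        linear_combination (norm := abel_nf) h
      have hf0 : f 0 = 0 := by simp [hf, hθ0, hG₀0]
      have hfε : f ε = -((1 - ε)⁻¹ • (ε • G₁ (θ ε))) := by
        have h3 := congrArg (fun x => (1 - ε)⁻¹ • x) hG0eval
        simpa [smul_smul, inv_mul_cancel₀ hne1', smul_neg, hf] using h3
      rw [slope_def_module, hf0, sub_zero, sub_zero, hfε, smul_neg, smul_smul, smul_smul]
      congr 2
      field_simp
    exact hcont.mono_left nhdsWithin_le_nhds |>.congr' (hEq.mono fun ε h => h.symm)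
  have hderf : HasDerivAt f (-(G₁ θ₀)) 0 := hasDerivAt_iff_tendsto_slope.2 hslope
  have huniq : H (deriv θ 0) = -(G₁ θ₀) := hcomp.unique hderf
  have : deriv θ 0 = H.symm (-(G₁ θ₀)) := by
    rw [← huniq]; simp
  simpa using this
end

section
/- Let (S, 𝒜, μ) be a measure space with μ a probability measure, let F be a real Banach space, let γ > 0 and C ≥ 0, and let σ(t) = (1 + exp(−t))⁻¹ denote the logistic function. Let g : ℕ → S → ℝ be a sequence of measurable functions such that gₙ(s) → −∞ as n → ∞ for μ-almost every s, and let v : ℕ → S → F be almost-everywhere strongly measurable functions with ‖vₙ(s)‖ ≤ C for μ-almost every s and every n. Then ∫ σ(gₙ(s))^γ · (1 − σ(gₙ(s))) • vₙ(s) dμ(s) → 0 in F as n → ∞ (real power in the exponent). That is, the Hölder-DPO influence term vanishes in the worst-case limit where the flipped data attain arbitrarily low reward margins: Hölder-DPO satisfies the redescending property. -/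
open Filter Topology MeasureTheory

noncomputable def logistic (t : ℝ) : ℝ := (1 + Real.exp (-t))⁻¹

lemma logistic_pos (t : ℝ) : 0 < logistic t := by
  unfold logistic
  positivity

lemma logistic_le_one (t : ℝ) : logistic t ≤ 1 := by
  unfold logistic
  rw [inv_le_one_iff₀]
  right
  nlinarith [Real.exp_pos (-t)]

lemma logistic_measurable : Measurable logistic := by
  unfold logistic
  fun_prop

lemma logistic_tendsto_atBot : Tendsto logistic atBot (𝓝 0) := by
  unfold logistic
  apply tendsto_inv_atTop_zero.comp
  apply tendsto_atTop_add_const_left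
  exact Real.tendsto_exp_atTop.comp tendsto_neg_atBot_atTop

theorem stmt2
    {S : Type*} [MeasurableSpace S] (μ : Measure S) [IsProbabilityMeasure μ]
    {F : Type*} [NormedAddCommGroup F] [NormedSpace ℝ F] [CompleteSpace F]
    (γ C : ℝ) (hγ : 0 < γ) (hC : 0 ≤ C)
    (g : ℕ → S → ℝ) (hgmeas : ∀ n, Measurable (g n))
    (hgtend : ∀ᵐ s ∂μ, Tendsto (fun n => g n s) atTop atBot)
    (v : ℕ → S → F) (hvmeas : ∀ n, AEStronglyMeasurable (v n) μ)
    (hvbound : ∀ n, ∀ᵐ s ∂μ, ‖v n s‖ ≤ C) :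
    Tendsto (fun n => ∫ s, (logistic (g n s) ^ γ * (1 - logistic (g n s))) • v n s ∂μ)
      atTop (𝓝 (0 : F)) := by
  set φ : ℕ → S → ℝ := fun n s => logistic (g n s) ^ γ * (1 - logistic (g n s)) * C with hφ
  have hφnonneg : ∀ n s, 0 ≤ φ n s := by
    intro n s
    have h1 := logistic_pos (g n s)
    have h2 := logistic_le_one (g n s)
    have h3 : (0:ℝ) ≤ logistic (g n s) ^ γ := Real.rpow_nonneg h1.le _
    simp only [hφ]
    exact mul_nonneg (mul_nonneg h3 (by linarith)) hC
  have hφle : ∀ n s, φ n s ≤ C := by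
    intro n s
    have h1 := logistic_pos (g n s)
    have h2 := logistic_le_one (g n s)
    have hr1 : logistic (g n s) ^ γ ≤ 1 := Real.rpow_le_one h1.le h2 hγ.le
    have hr0 : (0:ℝ) ≤ logistic (g n s) ^ γ := Real.rpow_nonneg h1.le _
    simp only [hφ]
    calc logistic (g n s) ^ γ * (1 - logistic (g n s)) * C
        ≤ 1 * 1 * C := by
          apply mul_le_mul_of_nonneg_right _ hC
          apply mul_le_mul hr1 (by linarith) (by linarith) one_pos.le
      _ = C := by ring
  have hφmeas : ∀ n, Measurable (φ n) := by
    intro n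
    apply Measurable.mul _ measurable_const
    apply Measurable.mul
    · exact (Real.continuous_rpow_const hγ.le).measurable.comp
        (logistic_measurable.comp (hgmeas n))
    · exact measurable_const.sub (logistic_measurable.comp (hgmeas n))
  -- ∫ φ n → 0 by dominated convergence
  have hφtend : Tendsto (fun n => ∫ s, φ n s ∂μ) atTop (𝓝 0) := by
    have h0 : (0:ℝ) = ∫ (_ : S), (0:ℝ) ∂μ := by simp
    rw [h0]
    apply tendsto_integral_of_dominated_convergence (fun _ => C)
    · exact fun n => (hφmeas n).aestronglyMeasurable
    · exact integrable_const C
    · intro n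
      filter_upwards with s
      rw [Real.norm_eq_abs, abs_of_nonneg (hφnonneg n s)]
      exact hφle n s
    · filter_upwards [hgtend] with s hs
      have hl : Tendsto (fun n => logistic (g n s)) atTop (𝓝 0) :=
        logistic_tendsto_atBot.comp hs
      have hrpow : Tendsto (fun n => logistic (g n s) ^ γ) atTop (𝓝 0) := by
        have hc : ContinuousAt (fun x : ℝ => x ^ γ) 0 :=
          Real.continuousAt_rpow_const 0 γ (Or.inr hγ.le)
        have := hc.tendsto.comp hl
        simpa [Real.zero_rpow hγ.ne', Function.comp_def] using this
      have : Tendsto (fun n => logistic (g n s) ^ γ * (1 - logistic (g n s)) * C)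
          atTop (𝓝 (0 * (1 - 0) * C)) :=
        ((hrpow.mul ((tendsto_const_nhds).sub hl)).mul tendsto_const_nhds)
      simpa using this
  -- squeeze
  have hnorm : ∀ n, ‖∫ s, (logistic (g n s) ^ γ * (1 - logistic (g n s))) • v n s ∂μ‖
      ≤ ∫ s, φ n s ∂μ := by
    intro n
    have hint : Integrable (φ n) μ := by
      apply (integrable_const C).mono' (hφmeas n).aestronglyMeasurable
      filter_upwards with s
      rw [Real.norm_eq_abs, abs_of_nonneg (hφnonneg n s)]
      exact hφle n s
    apply norm_integral_le_of_norm_le hint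
    filter_upwards [hvbound n] with s hv
    simp only [hφ]
    rw [norm_smul, Real.norm_eq_abs]
    have h1 := logistic_pos (g n s)
    have h2 := logistic_le_one (g n s)
    have hr0 : (0:ℝ) ≤ logistic (g n s) ^ γ := Real.rpow_nonneg h1.le _
    have hcoef : (0:ℝ) ≤ logistic (g n s) ^ γ * (1 - logistic (g n s)) := by nlinarith
    rw [abs_of_nonneg hcoef]
    exact mul_le_mul_of_nonneg_left hv hcoef
  rw [tendsto_zero_iff_norm_tendsto_zero]
  exact squeeze_zero (fun n => norm_nonneg _) hnorm hφtend
end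

section
/- For every real c with 0 ≤ c < 1/2, the rDPO influence weight w(t) := ((1−c)·σ(−t) + c·σ(t)) / (1−2c), where σ(t) = (1 + exp(−t))⁻¹ denotes the logistic function, satisfies w(t) → (1−c)/(1−2c) as t → −∞, and this limit is strictly positive. Hence the rDPO influence-function weight does not redescend to zero in the worst-case limit where the flipped preference margin tends to −∞. -/
open Filter Topology

theorem stmt6 (c : ℝ) (hc0 : 0 ≤ c) (hc : c < 1 / 2) :
    Tendsto (fun t => ((1 - c) * logistic (-t) + c * logistic t) / (1 - 2 * c))
      atBot (𝓝 ((1 - c) / (1 - 2 * c))) ∧ 0 < (1 - c) / (1 - 2 * c) := by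
  have h1 : Tendsto (fun t : ℝ => logistic (-t)) atBot (𝓝 1) := by
    have : Tendsto (fun t : ℝ => (1 + Real.exp t)⁻¹) atBot (𝓝 (1 + 0)⁻¹) := by
      exact ((tendsto_const_nhds.add Real.tendsto_exp_atBot).inv₀ (by norm_num))
    simpa [logistic] using this
  have h2 : Tendsto (fun t : ℝ => logistic t) atBot (𝓝 0) := by
    have he : Tendsto (fun t : ℝ => 1 + Real.exp (-t)) atBot atTop := by
      exact tendsto_atTop_add_const_left _ 1
        (Real.tendsto_exp_atTop.comp tendsto_neg_atBot_atTop)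
    exact he.inv_tendsto_atTop
  constructor
  · have := ((h1.const_mul (1 - c)).add (h2.const_mul c)).div_const (1 - 2 * c)
    simpa using this
  · apply div_pos <;> linarith
end
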